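/- Let G be a König-Egerváry graph. Then the set of α-critical edges of G forms a matching, i.e., no two distinct α-critical edges of G share an endpoint. -/

import Mathlib

/-!
A stable set contains at most one endpoint of each edge of a matching, so `α(H) + μ(H) ≤ |V|`
for every graph `H`. If `e` is α-critical in a König–Egerváry graph `G`, this bound for `G - e`
forces `μ(G - e) < μ(G)`; hence `e` lies in every maximum matching of `G`, and any two
α-critical edges lie in one matching.
-/

open scoped Classical

namespace KEG

variable {V : Type*}

/-- `S` is a stable (independent) set of vertices of `G`. -/
def IsStable (G : SimpleGraph V) (S : Finset V) : Prop :=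
  ∀ ⦃x⦄, x ∈ S → ∀ ⦃y⦄, y ∈ S → ¬G.Adj x y

/-- The stability number `α(G)`: maximum cardinality of a stable set. -/
noncomputable def alphaNum (G : SimpleGraph V) : ℕ :=
  sSup {n | ∃ S : Finset V, IsStable G S ∧ S.card = n}

/-- `S` is a maximum stable set of `G`. -/
def IsMaxStable (G : SimpleGraph V) (S : Finset V) : Prop :=
  IsStable G S ∧ S.card = alphaNum G

/-- `M` is a matching of `G`: a set of edges of `G`, pairwise non-incident. -/
def IsMatching (G : SimpleGraph V) (M : Finset (Sym2 V)) : Prop :=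
  (∀ e ∈ M, e ∈ G.edgeSet) ∧
    ∀ e ∈ M, ∀ f ∈ M, e ≠ f → ∀ v : V, v ∈ e → v ∉ f

/-- The matching number `μ(G)`: maximum cardinality of a matching. -/
noncomputable def muNum (G : SimpleGraph V) : ℕ :=
  sSup {n | ∃ M : Finset (Sym2 V), IsMatching G M ∧ M.card = n}

/-- A perfect matching: a matching covering every vertex. -/
def IsPerfectMatching (G : SimpleGraph V) (M : Finset (Sym2 V)) : Prop :=
  IsMatching G M ∧ ∀ v : V, ∃ e ∈ M, v ∈ e

/-- A maximal matching: a matching such that no edge of `G` can be added to it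
while keeping pairwise non-incidence, i.e. every edge of `G` outside `M` is
incident to an edge of `M`. -/
def IsMaximalMatching (G : SimpleGraph V) (M : Finset (Sym2 V)) : Prop :=
  IsMatching G M ∧ ∀ e ∈ G.edgeSet, e ∉ M → ∃ f ∈ M, ∃ v : V, v ∈ e ∧ v ∈ f

/-- `G` is a König-Egerváry graph: `α(G) + μ(G) = |V(G)|`. -/
def KonigEgervary (G : SimpleGraph V) [Fintype V] : Prop :=
  alphaNum G + muNum G = Fintype.card V

/-- `e` is an α-critical edge of `G`: `α(G - e) > α(G)`. -/
def IsAlphaCritical (G : SimpleGraph V) (e : Sym2 V) : Prop :=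
  e ∈ G.edgeSet ∧ alphaNum G < alphaNum (G.deleteEdges {e})

/-- `e` is a μ-critical edge of `G`: `μ(G - e) < μ(G)`. -/
def IsMuCritical (G : SimpleGraph V) (e : Sym2 V) : Prop :=
  e ∈ G.edgeSet ∧ muNum (G.deleteEdges {e}) < muNum G

/-- `core(G)`: the set of vertices belonging to every maximum stable set of `G`. -/
def core (G : SimpleGraph V) : Set V :=
  {v | ∀ S : Finset V, IsMaxStable G S → v ∈ S}

/-- `ξ(G) = |core(G)|`. -/
noncomputable def xi (G : SimpleGraph V) : ℕ := (core G).ncard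

/-- `σ(G)`: the number of vertices belonging to no maximum stable set of `G`. -/
noncomputable def sigmaNum (G : SimpleGraph V) : ℕ :=
  {v : V | ∀ S : Finset V, IsMaxStable G S → v ∉ S}.ncard

/-- `η(G)`: the number of α-critical edges of `G`. -/
noncomputable def eta (G : SimpleGraph V) : ℕ :=
  {e : Sym2 V | IsAlphaCritical G e}.ncard

/-- `N(A)`: the set of vertices adjacent to some vertex of `A`. -/
def nbhd (G : SimpleGraph V) (A : Set V) : Set V :=
  {v | ∃ a ∈ A, G.Adj a v}

/-- `N[A] = A ∪ N(A)`: the closed neighborhood of `A`. -/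
def closedNbhd (G : SimpleGraph V) (A : Set V) : Set V :=
  A ∪ nbhd G A

section Bounds

variable [Fintype V] (G : SimpleGraph V)

theorem bddAbove_stable_card :
    BddAbove {n | ∃ S : Finset V, IsStable G S ∧ S.card = n} := by
  refine ⟨Fintype.card V, ?_⟩
  rintro n ⟨S, -, rfl⟩
  exact S.card_le_univ

theorem bddAbove_matching_card :
    BddAbove {n | ∃ M : Finset (Sym2 V), IsMatching G M ∧ M.card = n} := by
  refine ⟨Fintype.card (Sym2 V), ?_⟩
  rintro n ⟨M, -, rfl⟩
  exact M.card_le_univ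

theorem exists_isMaxStable : ∃ S : Finset V, IsMaxStable G S :=
  show alphaNum G ∈ {n | ∃ S : Finset V, IsStable G S ∧ S.card = n} from
    Nat.sSup_mem ⟨0, ∅, fun _ hx => absurd hx (Finset.notMem_empty _), rfl⟩
      (bddAbove_stable_card G)

theorem exists_isMatching_card_eq_muNum :
    ∃ M : Finset (Sym2 V), IsMatching G M ∧ M.card = muNum G :=
  show muNum G ∈ {n | ∃ M : Finset (Sym2 V), IsMatching G M ∧ M.card = n} from
    Nat.sSup_mem ⟨0, ∅, ⟨by simp, by simp⟩, rfl⟩ (bddAbove_matching_card G)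

variable {G}

theorem IsMatching.card_le_muNum {M : Finset (Sym2 V)} (hM : IsMatching G M) :
    M.card ≤ muNum G :=
  le_csSup (bddAbove_matching_card G) ⟨M, hM, rfl⟩

end Bounds

theorem IsStable.exists_mem_notMem {G : SimpleGraph V} {S : Finset V} (hS : IsStable G S)
    {e : Sym2 V} (he : e ∈ G.edgeSet) : ∃ v ∈ e, v ∉ S := by
  induction e using Sym2.ind with
  | _ x y =>
    by_cases hx : x ∈ S
    · exact ⟨y, Sym2.mem_mk_right x y, fun hy => hS hx hy he⟩
    · exact ⟨x, Sym2.mem_mk_left x y, hx⟩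

theorem IsMatching.deleteEdges {G : SimpleGraph V} {M : Finset (Sym2 V)} (hM : IsMatching G M)
    {e : Sym2 V} (he : e ∉ M) : IsMatching (G.deleteEdges {e}) M :=
  ⟨fun f hf => by
    rw [SimpleGraph.edgeSet_deleteEdges]
    exact ⟨hM.1 f hf, by rintro rfl; exact he hf⟩, hM.2⟩

theorem IsStable.card_add_card_le [Fintype V] {G : SimpleGraph V} {S : Finset V}
    {M : Finset (Sym2 V)} (hS : IsStable G S) (hM : IsMatching G M) :
    S.card + M.card ≤ Fintype.card V := by
  choose f hfe hfS using fun e : M => hS.exists_mem_notMem (hM.1 e e.2)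
  have hinj : Function.Injective f := fun e e' hee' =>
    Subtype.ext <| by_contra fun hne => hM.2 e e.2 e' e'.2 hne _ (hfe e) (hee' ▸ hfe e')
  have hM_le : M.card ≤ Sᶜ.card := by
    simpa using Finset.card_le_card_of_injOn (s := Finset.univ) (t := Sᶜ) f
      (fun e _ => by simpa using hfS e) hinj.injOn
  have := S.card_add_card_compl
  omega

theorem alphaNum_add_muNum_le [Fintype V] (G : SimpleGraph V) :
    alphaNum G + muNum G ≤ Fintype.card V := by
  obtain ⟨S, hS, hS_card⟩ := exists_isMaxStable G
  obtain ⟨M, hM, hM_card⟩ := exists_isMatching_card_eq_muNum G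
  rw [← hS_card, ← hM_card]
  exact hS.card_add_card_le hM

section KonigEgervary

variable [Fintype V] {G : SimpleGraph V} {e : Sym2 V}

theorem IsAlphaCritical.muNum_deleteEdges_lt (hG : KonigEgervary G) (he : IsAlphaCritical G e) :
    muNum (G.deleteEdges {e}) < muNum G := by
  have hbound := alphaNum_add_muNum_le (G.deleteEdges {e})
  have halpha := he.2
  unfold KonigEgervary at hG
  omega

theorem IsAlphaCritical.mem_of_isMatching_card_eq_muNum (hG : KonigEgervary G)
    (he : IsAlphaCritical G e) {M : Finset (Sym2 V)} (hM : IsMatching G M)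
    (hM_card : M.card = muNum G) : e ∈ M := by
  by_contra heM
  have hM_le := (hM.deleteEdges heM).card_le_muNum
  have hmu := he.muNum_deleteEdges_lt hG
  omega

end KonigEgervary

/-- In a König-Egerváry graph, the α-critical edges form a matching:
no two distinct α-critical edges share an endpoint. -/
theorem stmt_2 {V : Type*} [Fintype V] (G : SimpleGraph V)
    (hG : KonigEgervary G) (e f : Sym2 V)
    (he : IsAlphaCritical G e) (hf : IsAlphaCritical G f) (hef : e ≠ f)
    (v : V) (hv : v ∈ e) : v ∉ f := by
  obtain ⟨M, hM, hM_card⟩ := exists_isMatching_card_eq_muNum G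
  exact hM.2 e (he.mem_of_isMatching_card_eq_muNum hG hM hM_card)
    f (hf.mem_of_isMatching_card_eq_muNum hG hM hM_card) hef v hv

end KEG
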